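/- arXiv:1309.6710 — 5 statements merged into one kernel-verified Lean document; each statement's English description precedes it below -/
import Mathlib

section
/- The number of labeled trees on n vertices (n ≥ 2) in which vertex j has degree δ_j for each j equals the multinomial coefficient (n-2)! / ∏_{j=1}^n (δ_j - 1)!, provided each δ_j ≥ 1 and ∑_j δ_j = 2(n-1). -/
/-!
Removing a leaf `v` is a bijection between the trees on `V` with degree sequence `δ` (where
`δ v = 1`) and the pairs `(u, T)` of a vertex `u ≠ v` and a tree `T` on `V ∖ {v}` with degree
sequence `δ - e_u`; the inverse attaches `v` to `u`. Hence the number `c(δ)` of such trees satisfies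
`c(δ) = ∑_{u ≠ v} c(δ - e_u)`, in which the terms with `δ u = 1` vanish. By induction on the number
`n` of vertices the remaining terms are `(δ u - 1) (n - 3)! / ∏ⱼ (δ j - 1)!`, and
`∑_{u ≠ v} (δ u - 1) = n - 2` turns the sum into `(n - 2)! / ∏ⱼ (δ j - 1)!`.
-/

open Finset Nat

section Arithmetic

variable {ι : Type*} {f : ι → ℕ}

theorem one_le_tsub_single [DecidableEq ι] {u : ι} (hf : ∀ j, 1 ≤ f j) (hu : 2 ≤ f u) (j : ι) :
    1 ≤ (f - Pi.single u 1 : ι → ℕ) j := by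
  rw [Pi.sub_apply, Pi.single_apply]
  split_ifs with h
  · exact Nat.le_sub_one_of_lt (h ▸ hu)
  · exact hf j

variable [Fintype ι]

theorem sum_tsub_one (hf : ∀ j, 1 ≤ f j) : ∑ j, (f j - 1) = ∑ j, f j - Fintype.card ι := by
  rw [Finset.sum_tsub_distrib _ fun j _ => hf j]
  simp

theorem eq_one_of_sum_eq_card (hf : ∀ j, 1 ≤ f j) (h : ∑ j, f j = Fintype.card ι) (j : ι) :
    f j = 1 :=
  ((Finset.sum_eq_sum_iff_of_le fun j _ => hf j).1 (by simpa using h.symm) j (mem_univ j)).symm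

theorem exists_eq_one_of_sum_lt (hf : ∀ j, 1 ≤ f j) (h : ∑ j, f j < 2 * Fintype.card ι) :
    ∃ j, f j = 1 := by
  by_contra! h'
  have : #univ • 2 ≤ ∑ j, f j :=
    Finset.card_nsmul_le_sum _ _ _ fun j _ => (hf j).lt_of_ne (h' j).symm
  rw [Finset.card_univ, smul_eq_mul] at this
  omega

variable [DecidableEq ι] {u : ι}

theorem sum_tsub_single_one (hu : 1 ≤ f u) :
    ∑ j, (f - Pi.single u 1 : ι → ℕ) j = ∑ j, f j - 1 := by
  rw [Finset.sum_congr rfl fun j _ => Pi.sub_apply f _ j, Finset.sum_tsub_distrib]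
  · simp
  · intro j _
    rw [Pi.single_apply]
    split_ifs with h
    · exact h ▸ hu
    · exact Nat.zero_le _

theorem prod_factorial_tsub_one_eq_mul (hu : 2 ≤ f u) :
    ∏ j, (f j - 1)! = (f u - 1) * ∏ j, ((f - Pi.single u 1 : ι → ℕ) j - 1)! := by
  rw [Fintype.prod_eq_mul_prod_compl u, Fintype.prod_eq_mul_prod_compl u, ← mul_assoc,
    Pi.sub_apply, Pi.single_eq_same, ← Nat.mul_factorial_pred (by omega : f u - 1 ≠ 0)]
  congr 1
  refine Finset.prod_congr rfl fun j hj => ?_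
  rw [Pi.sub_apply, Pi.single_eq_of_ne (by simpa using hj), Nat.sub_zero]

end Arithmetic

namespace SimpleGraph

variable {V : Type*} {G : SimpleGraph V} {v : V}

theorem isTree_iff_isTree_induce_compl_singleton {u : V} (hv : G.neighborSet v = {u}) :
    G.IsTree ↔ (G.induce {v}ᶜ).IsTree := by
  have hvu : G.Adj v u := by simp [← mem_neighborSet, hv]
  constructor
  · intro hG
    have : Fintype (G.neighborSet v) := hv ▸ inferInstance
    have hdeg : G.degree v = 1 := by
      rw [degree_eq_one_iff_existsUnique_adj]
      simp [← mem_neighborSet, hv]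
    exact ⟨hG.connected.induce_compl_singleton_of_degree_eq_one hdeg, hG.isAcyclic.induce _⟩
  · intro hH
    refine ⟨(connected_iff _).2 ⟨?_, ⟨v⟩⟩, fun w c hc => ?_⟩
    · have reach_u : ∀ x, G.Reachable x u := by
        intro x
        by_cases hx : x = v
        · exact hx ▸ hvu.reachable
        · exact (hH.preconnected ⟨x, hx⟩ ⟨u, hvu.ne'⟩).map (Embedding.induce _).toHom
      exact fun x y => (reach_u x).trans (reach_u y).symm
    by_cases hvc : v ∈ c.support
    · -- a vertex on a cycle has two neighbours along it
      have := (hc.ncard_neighborSet_toSubgraph_eq_two hvc).symm.le.trans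
        (Set.ncard_le_ncard (c.toSubgraph.neighborSet_subset v) (hv ▸ Set.finite_singleton u))
      simp [hv] at this
    · have hcv : ∀ x ∈ c.support, x ∈ ({v}ᶜ : Set V) := fun x hx hxv => hvc (hxv ▸ hx)
      refine hH.isAcyclic (c.induce _ hcv) ?_
      rwa [← Walk.isCycle_map_iff_of_injective (f := (Embedding.induce _).toHom)
        Subtype.val_injective, Walk.map_induce]

theorem ncard_neighborSet_eq_ncard_neighborSet_induce_add [G.LocallyFinite] [DecidableRel G.Adj]
    (j : ({v}ᶜ : Set V)) :
    (G.neighborSet j).ncard =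
      ((G.induce {v}ᶜ).neighborSet j).ncard + if G.Adj j v then 1 else 0 := by
  rw [neighborSet_induce, ← Set.ncard_image_of_injective _ Subtype.val_injective,
    Subtype.image_preimage_coe, ← Set.sdiff_eq_compl_inter]
  split_ifs with h
  · exact (Set.ncard_sdiff_singleton_add_one (s := G.neighborSet j) h).symm
  · rw [Set.sdiff_singleton_eq_self (s := G.neighborSet j) h, add_zero]

def attachLeaf (H : SimpleGraph ({v}ᶜ : Set V)) (u : ({v}ᶜ : Set V)) : SimpleGraph V :=
  H.map Subtype.val ⊔ edge v u

variable {H : SimpleGraph ({v}ᶜ : Set V)} {u : ({v}ᶜ : Set V)}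

theorem neighborSet_attachLeaf_self : (attachLeaf H u).neighborSet v = {(u : V)} := by
  have hu : (u : V) ≠ v := u.2
  ext w
  simp only [attachLeaf, mem_neighborSet, sup_adj, map_adj', edge_adj, Subtype.exists]
  grind

theorem induce_attachLeaf : (attachLeaf H u).induce {v}ᶜ = H := by
  ext a b
  have ha : (a : V) ≠ v := a.2
  have hb : (b : V) ≠ v := b.2
  simp only [attachLeaf, comap_adj, Function.Embedding.subtype_apply, sup_adj, map_adj', edge_adj,
    Subtype.exists]
  grind [Adj.ne]

theorem attachLeaf_induce (hv : G.neighborSet v = {(u : V)}) :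
    attachLeaf (G.induce {v}ᶜ) u = G := by
  have hadj : ∀ w, G.Adj v w ↔ w = u := by simp [← mem_neighborSet, hv]
  ext a b
  simp only [attachLeaf, sup_adj, map_adj', comap_adj, Function.Embedding.subtype_apply, edge_adj,
    Subtype.exists]
  grind [Adj.ne, Adj.symm]

theorem adj_attachLeaf_self_iff {j : V} : (attachLeaf H u).Adj j v ↔ j = u := by
  rw [adj_comm, ← mem_neighborSet, neighborSet_attachLeaf_self, Set.mem_singleton_iff]

def treesWithDegrees (δ : V → ℕ) : Set (SimpleGraph V) :=
  {G | G.IsTree ∧ ∀ j, (G.neighborSet j).ncard = δ j}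

theorem attachLeaf_mem_treesWithDegrees_iff [Finite V] [DecidableEq V] {δ : V → ℕ}
    (hv : δ v = 1) (hu : 1 ≤ δ u) :
    attachLeaf H u ∈ treesWithDegrees δ ↔
      H ∈ treesWithDegrees (δ ∘ (↑) - Pi.single u 1) := by
  have := Fintype.ofFinite V
  classical
  have hdeg (j : ({v}ᶜ : Set V)) :=
    ncard_neighborSet_eq_ncard_neighborSet_induce_add (G := attachLeaf H u) j
  simp only [adj_attachLeaf_self_iff, induce_attachLeaf, Subtype.coe_inj] at hdeg
  rw [treesWithDegrees, Set.mem_ofPred_eq,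
    isTree_iff_isTree_induce_compl_singleton neighborSet_attachLeaf_self, induce_attachLeaf]
  refine and_congr_right fun _ => ⟨fun h j => ?_, fun h j => ?_⟩
  · have := hdeg j ▸ h j
    rw [Pi.sub_apply, Pi.single_apply, Function.comp_apply]
    split_ifs at this ⊢ <;> omega
  · by_cases hj : j = v
    · rw [hj, neighborSet_attachLeaf_self, Set.ncard_singleton, hv]
    · rw [hdeg ⟨j, hj⟩, h ⟨j, hj⟩, Pi.sub_apply, Pi.single_apply, Function.comp_apply]
      split_ifs with hju
      · subst hju
        exact Nat.sub_add_cancel hu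
      · rfl

theorem card_treesWithDegrees_eq_sum [Fintype V] [DecidableEq V] {δ : V → ℕ} (hv : δ v = 1)
    (hpos : ∀ j, 1 ≤ δ j) :
    Nat.card (treesWithDegrees δ) = ∑ u : ({v}ᶜ : Set V),
      Nat.card (treesWithDegrees (δ ∘ (↑) - Pi.single u 1)) := by
  rw [← Nat.card_sigma]
  symm
  refine Nat.card_eq_of_bijective (fun p => ⟨attachLeaf p.2.1 p.1,
    (attachLeaf_mem_treesWithDegrees_iff hv (hpos _)).2 p.2.2⟩) ⟨?_, ?_⟩
  · rintro ⟨u, H, hH⟩ ⟨u', H', hH'⟩ h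
    have hG : attachLeaf H u = attachLeaf H' u' := congrArg Subtype.val h
    obtain rfl : u = u' := Subtype.ext <| by
      simpa [neighborSet_attachLeaf_self] using congrArg (·.neighborSet v) hG
    obtain rfl : H = H' := by
      simpa only [induce_attachLeaf] using congrArg (·.induce {v}ᶜ) hG
    rfl
  · rintro ⟨G, hG⟩
    obtain ⟨u, hu⟩ := Set.ncard_eq_one.1 ((hG.2 v).trans hv)
    have huv : u ≠ v := (G.ne_of_adj (hu ▸ rfl : u ∈ G.neighborSet v)).symm
    have hGu : attachLeaf (G.induce {v}ᶜ) ⟨u, huv⟩ = G := attachLeaf_induce hu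
    refine ⟨⟨⟨u, huv⟩, G.induce {v}ᶜ, ?_⟩, Subtype.ext hGu⟩
    rw [← attachLeaf_mem_treesWithDegrees_iff hv (hpos u), hGu]
    exact hG

theorem treesWithDegrees_eq_empty [Finite V] [Nontrivial V] {δ : V → ℕ} {u : V}
    (hu : δ u = 0) : treesWithDegrees δ = ∅ := by
  refine Set.eq_empty_of_forall_notMem fun G ⟨hG, hdeg⟩ => ?_
  obtain ⟨w, hw⟩ := hG.preconnected.exists_adj_of_nontrivial u
  have := (Set.ncard_pos (s := G.neighborSet u)).2 ⟨w, hw⟩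
  rw [hdeg, hu] at this
  exact this.false

theorem treesWithDegrees_eq_singleton_top [Finite V] (hV : Nat.card V = 2) {δ : V → ℕ}
    (hδ : ∀ j, δ j = 1) : treesWithDegrees δ = {⊤} := by
  have : Nontrivial V := Finite.one_lt_card_iff_nontrivial.1 (by omega)
  ext G
  refine ⟨fun ⟨hG, _⟩ => ?_, ?_⟩
  · ext x y
    refine ⟨Adj.ne, fun hxy => ?_⟩
    obtain ⟨z, hz⟩ := hG.preconnected.exists_adj_of_nontrivial x
    obtain rfl : z = y := ((Nat.card_eq_two_iff' x).1 hV).unique hz.ne' (Ne.symm hxy)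
    exact hz
  · rintro rfl
    refine ⟨⟨connected_top, IsAcyclic.of_card_le_two ?_⟩, fun j => ?_⟩
    · rw [ENat.card_eq_coe_natCard, hV]; rfl
    · rw [neighborSet_top, Set.ncard_compl, Set.ncard_singleton, hV, hδ]

theorem card_treesWithDegrees_mul_prod_factorial [Fintype V] [DecidableEq V] {δ : V → ℕ}
    (hV : 2 ≤ Fintype.card V) (hpos : ∀ j, 1 ≤ δ j)
    (hsum : ∑ j, δ j = 2 * (Fintype.card V - 1)) :
    Nat.card (treesWithDegrees δ) * ∏ j, (δ j - 1)! = (Fintype.card V - 2)! := by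
  obtain ⟨n, hn⟩ : ∃ n, Fintype.card V = n + 2 := ⟨_, (Nat.sub_add_cancel hV).symm⟩
  clear hV
  induction n generalizing V with
  | zero =>
    have hδ := eq_one_of_sum_eq_card hpos (by omega)
    rw [treesWithDegrees_eq_singleton_top (by rwa [Nat.card_eq_fintype_card]) hδ]
    simp [hδ, hn]
  | succ n ih =>
    obtain ⟨v, hv⟩ := exists_eq_one_of_sum_lt hpos (by omega)
    set δ' : ({v}ᶜ : Set V) → ℕ := δ ∘ (↑)
    have hpos' (j : ({v}ᶜ : Set V)) : 1 ≤ δ' j := hpos j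
    have hcard : Fintype.card ({v}ᶜ : Set V) = n + 2 := by simp [Finset.filter_ne', hn]
    have hsum' : ∑ j, δ' j = 2 * (n + 2) - 1 := by
      have : ∑ j, δ j = δ v + ∑ j, δ' j := Fintype.sum_eq_add_sum_subtype_ne δ v
      omega
    have hprod : ∏ j, (δ j - 1)! = ∏ j, (δ' j - 1)! := by
      rw [Fintype.prod_eq_mul_prod_subtype_ne _ v, hv, Nat.sub_self, Nat.factorial_zero, one_mul]
      rfl
    have key (u : ({v}ᶜ : Set V)) :
        Nat.card (treesWithDegrees (δ' - Pi.single u 1)) * ∏ j : V, (δ j - 1)! =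
          (δ' u - 1) * n ! := by
      rcases (hpos' u).eq_or_lt with hu_leaf | hu
      · have : Nontrivial ({v}ᶜ : Set V) := Fintype.one_lt_card_iff_nontrivial.1 (by omega)
        rw [← hu_leaf, treesWithDegrees_eq_empty (u := u) (by simp [← hu_leaf])]
        simp
      · have hsum'' : ∑ j, (δ' - Pi.single u 1 : _ → ℕ) j =
            2 * (Fintype.card ({v}ᶜ : Set V) - 1) := by
          rw [sum_tsub_single_one hu.le, hsum', hcard]
          omega
        rw [hprod, prod_factorial_tsub_one_eq_mul hu, mul_left_comm,
          ih (one_le_tsub_single hpos' hu) hsum'' hcard, hcard]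
        rfl
    rw [card_treesWithDegrees_eq_sum hv hpos, Finset.sum_mul,
      Finset.sum_congr rfl fun u _ => key u, ← Finset.sum_mul,
      sum_tsub_one hpos', hsum', hcard, hn]
    convert (Nat.factorial_succ n).symm using 2 <;> omega

end SimpleGraph

/-- The number of labeled trees on `n ≥ 2` vertices in which vertex `j` has degree `δ j`
(for a degree sequence of positive integers summing to `2*(n-1)`) is the multinomial
coefficient `(n-2)! / ∏ j (δ j - 1)!`. -/
theorem num_trees_with_degree_sequence (n : ℕ) (hn : 2 ≤ n) (δ : Fin n → ℕ)
    (hpos : ∀ j, 1 ≤ δ j) (hsum : ∑ j, δ j = 2 * (n - 1)) :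
    Nat.card {G : SimpleGraph (Fin n) // G.IsTree ∧ ∀ j, (G.neighborSet j).ncard = δ j} =
      (n - 2).factorial / ∏ j, (δ j - 1).factorial := by
  have h := SimpleGraph.card_treesWithDegrees_mul_prod_factorial (V := Fin n)
    (by rwa [Fintype.card_fin]) hpos (by rwa [Fintype.card_fin])
  rw [Fintype.card_fin] at h
  exact (Nat.div_eq_of_eq_mul_left (prod_pos fun j _ => factorial_pos _) h.symm).symm
end

section
/- For integers d ≥ 3 and n ≥ 2, the sum over all degree sequences δ ∈ ℕ^n with ∑_j δ_j = 2(n-1) of ∏_{j=1}^n (d)_{δ_j} / (δ_j - 1)!, multiplied by (n-2)!, equals (n-2)! · d^n · C((d-1)n, n-2), where (d)_k denotes the falling factorial d(d-1)···(d-k+1) and C(·,·) is the binomial coefficient. -/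
/-!
Writing `δ = l + 1`, each factor becomes `(d)_{l+1} / l! = d * C(d - 1, l)`, and the tuples
`l` range over `ℕ^n` with `∑ l = n - 2`. The sum is then `d ^ n` times the coefficient of
`x ^ (n - 2)` in `((1 + x) ^ (d - 1)) ^ n = (1 + x) ^ ((d - 1) * n)`, i.e.
`d ^ n * C((d - 1) n, n - 2)`.
-/

open Finset

theorem Nat.descFactorial_succ_eq_mul_factorial_mul_choose (d m : ℕ) :
    d.descFactorial (m + 1) = d * (m.factorial * (d - 1).choose m) := by
  cases d with
  | zero => simp
  | succ c => rw [Nat.succ_descFactorial_succ, Nat.descFactorial_eq_factorial_mul_choose,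
      Nat.add_sub_cancel]

theorem Nat.cast_descFactorial_succ_div_factorial {K : Type*} [Field K] [CharZero K] (d m : ℕ) :
    (d.descFactorial (m + 1) : K) / m.factorial = d * (d - 1).choose m := by
  rw [Nat.descFactorial_succ_eq_mul_factorial_mul_choose]
  push_cast
  rw [mul_left_comm, mul_div_cancel_left₀ _ (Nat.cast_ne_zero.2 m.factorial_ne_zero)]

theorem PowerSeries.coeff_one_add_X_pow {R : Type*} [Semiring R] (m k : ℕ) :
    coeff k ((1 + X : PowerSeries R) ^ m) = m.choose k := by
  rw [show (1 + X : PowerSeries R) = ((1 + .X : Polynomial R) : PowerSeries R) by simp,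
    ← Polynomial.coe_pow, Polynomial.coeff_coe,
    Polynomial.coeff_one_add_X_pow]

theorem Finset.sum_finsuppAntidiag_prod_choose {ι : Type*} [DecidableEq ι] (s : Finset ι)
    (m k : ℕ) :
    ∑ l ∈ s.finsuppAntidiag k, ∏ i ∈ s, m.choose (l i) = (m * #s).choose k := by
  have h := PowerSeries.coeff_prod (fun _ : ι ↦ (1 + PowerSeries.X : PowerSeries ℕ) ^ m) k s
  simp only [prod_const, ← pow_mul, PowerSeries.coeff_one_add_X_pow, Nat.cast_id] at h
  exact h.symm

theorem finsum_ite_pos_tuple_eq_sum_finsuppAntidiag {ι M : Type*} [Fintype ι] [DecidableEq ι]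
    [AddCommMonoid M] [DecidablePred fun δ : ι → ℕ ↦ ∀ j, 1 ≤ δ j] (k : ℕ) (g : (ι → ℕ) → M) :
    ∑ᶠ δ : ι → ℕ, (if (∀ j, 1 ≤ δ j) ∧ ∑ j, δ j = k + Fintype.card ι then g δ else 0)
      = ∑ l ∈ univ.finsuppAntidiag k, g (⇑l + 1) := by
  have hsum (l : ι → ℕ) : ∑ j, (l j + 1) = ∑ j, l j + Fintype.card ι := by
    simp [sum_add_distrib]
  set shift : (ι →₀ ℕ) → ι → ℕ := fun l ↦ ⇑l + 1 with hshift
  have hinj : Set.InjOn shift ((univ : Finset ι).finsuppAntidiag k : Set (ι →₀ ℕ)) :=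
    fun a _ b _ h ↦ Finsupp.ext fun i ↦ by simpa [hshift] using congrFun h i
  rw [finsum_eq_sum_of_support_subset _ (s := (univ.finsuppAntidiag k).image shift),
    sum_image hinj]
  · refine sum_congr rfl fun l hl ↦ if_pos ⟨fun j ↦ by simp [hshift], ?_⟩
    rw [mem_finsuppAntidiag] at hl
    simpa [hshift, hsum] using hl.1
  · intro δ hδ
    obtain ⟨hpos, hδsum⟩ := (ite_ne_right_iff.1 hδ).1
    refine mem_image.2 ⟨Finsupp.equivFunOnFinite.symm (δ - 1), ?_,
      funext fun j ↦ Nat.sub_add_cancel (hpos j)⟩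
    have : ∑ j, δ j = ∑ j, (δ j - 1) + Fintype.card ι := by
      rw [← hsum]
      exact sum_congr rfl fun j _ ↦ (Nat.sub_add_cancel (hpos j)).symm
    rw [mem_finsuppAntidiag]
    refine ⟨?_, subset_univ _⟩
    simp only [Finsupp.coe_equivFunOnFinite_symm, Pi.sub_apply, Pi.one_apply]
    omega

theorem degree_sequence_sum_general (d n : ℕ) (hn : 2 ≤ n) :
    ((n - 2).factorial : ℝ) *
      ∑ᶠ δ : Fin n → ℕ,
        (if (∀ j, 1 ≤ δ j) ∧ (∑ j, δ j = 2 * (n - 1)) then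
          ∏ j, (d.descFactorial (δ j) : ℝ) / (δ j - 1).factorial
        else 0) =
      ((n - 2).factorial : ℝ) * d ^ n * ((d - 1) * n).choose (n - 2) := by
  have hdeg : 2 * (n - 1) = (n - 2) + Fintype.card (Fin n) := by
    rw [Fintype.card_fin]
    omega
  have hvandermonde := sum_finsuppAntidiag_prod_choose (univ : Finset (Fin n)) (d - 1) (n - 2)
  rw [card_univ, Fintype.card_fin] at hvandermonde
  rw [hdeg, finsum_ite_pos_tuple_eq_sum_finsuppAntidiag, mul_assoc, ← hvandermonde]
  simp only [Pi.add_apply, Pi.one_apply, Nat.add_sub_cancel,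
    Nat.cast_descFactorial_succ_div_factorial, prod_mul_distrib, prod_const, card_univ,
    Fintype.card_fin, ← mul_sum]
  push_cast
  rfl

/-- For `d ≥ 3` and `n ≥ 2`, the sum over degree sequences `δ` (with each `δ j ≥ 1`
and `∑ δ j = 2(n-1)`) of `∏ j (d)_{δ j} / (δ j - 1)!`, multiplied by `(n-2)!`,
equals `(n-2)! * d^n * C((d-1)n, n-2)`. -/
theorem degree_sequence_sum (d n : ℕ) (hd : 3 ≤ d) (hn : 2 ≤ n) :
    ((n - 2).factorial : ℝ) *
      ∑ᶠ δ : Fin n → ℕ,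
        (if (∀ j, 1 ≤ δ j) ∧ (∑ j, δ j = 2 * (n - 1)) then
          ∏ j, (d.descFactorial (δ j) : ℝ) / (δ j - 1).factorial
        else 0) =
      ((n - 2).factorial : ℝ) * d ^ n * ((d - 1) * n).choose (n - 2) :=
  degree_sequence_sum_general d n hn
end

section
/- Define, for 0 < β < 1 and d = 3, r_β = (8 - 4β - β² - √(β³(8+β)))/8 and f(z) = (1-z)^{-1/2} - 1. Then r_β ∈ (0,1) and β r_β f'(r_β) = f(r_β). -/
/-! Substituting `r = 1 - w²` with `w = √(1 - r)`, the saddle point equation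
`β r · ½ w⁻³ = w⁻¹ - 1` becomes `β (1 - w)(1 + w) = 2 w² (1 - w)`, i.e. the quadratic
`2 w² = β (1 + w)`. Its positive root is `w = (β + √(β (β + 8))) / 4`, which lies in `(0, 1)` for
`β ∈ (0, 1)`, and expanding `1 - w²` gives the closed form of `r_β`. -/

open Real

lemma sq_rpow_neg_half {w : ℝ} (hw : 0 < w) : (w ^ 2) ^ (-(1 / 2) : ℝ) = w⁻¹ := by
  rw [← rpow_natCast_mul hw.le, show ((2 : ℕ) : ℝ) * (-(1 / 2)) = -1 by norm_num, rpow_neg_one]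

lemma sq_rpow_neg_three_halves {w : ℝ} (hw : 0 < w) : (w ^ 2) ^ (-(3 / 2) : ℝ) = (w ^ 3)⁻¹ := by
  rw [← rpow_natCast_mul hw.le, show ((2 : ℕ) : ℝ) * (-(3 / 2)) = -(3 : ℕ) by norm_num,
    rpow_neg hw.le, rpow_natCast]

lemma saddle_point_equation_of_quadratic {β w : ℝ} (hw : 0 < w) (hq : 2 * w ^ 2 = β * (1 + w)) :
    β * (1 - w ^ 2) * ((1 / 2) * (1 - (1 - w ^ 2)) ^ (-(3 / 2) : ℝ)) =
      (1 - (1 - w ^ 2)) ^ (-(1 / 2) : ℝ) - 1 := by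
  rw [sub_sub_cancel, sq_rpow_neg_half hw, sq_rpow_neg_three_halves hw]
  field_simp
  linear_combination (w - 1) * hq

section QuadraticRoot

variable {β : ℝ}

lemma quadratic_root_eq (hβ : 0 ≤ β) :
    2 * ((β + √(β * (β + 8))) / 4) ^ 2 = β * (1 + (β + √(β * (β + 8))) / 4) := by
  have hs : √(β * (β + 8)) ^ 2 = β * (β + 8) := sq_sqrt (by positivity)
  linear_combination hs / 8

lemma quadratic_root_lt_one (hβ0 : 0 < β) (hβ1 : β < 1) : (β + √(β * (β + 8))) / 4 < 1 := by
  have hq := quadratic_root_eq hβ0.le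
  set w := (β + √(β * (β + 8))) / 4
  -- `(2w + 1)(w - 1) = 2w² - w - 1 = (β - 1)(1 + w) < 0`
  nlinarith

lemma one_sub_sq_quadratic_root (hβ : 0 ≤ β) :
    1 - ((β + √(β * (β + 8))) / 4) ^ 2 = (8 - 4 * β - β ^ 2 - √(β ^ 3 * (8 + β))) / 8 := by
  have hs : √(β * (β + 8)) ^ 2 = β * (β + 8) := sq_sqrt (by positivity)
  have hcube : √(β ^ 3 * (8 + β)) = β * √(β * (β + 8)) := by
    rw [show β ^ 3 * (8 + β) = β ^ 2 * (β * (β + 8)) by ring, sqrt_mul (by positivity),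
      sqrt_sq hβ]
  rw [hcube]
  linear_combination -hs / 16

end QuadraticRoot

/-- For `d = 3`: with `r_β = (8 - 4β - β² - √(β³(8+β)))/8` and `f(z) = (1-z)^{-1/2} - 1`
(so `f'(z) = ½(1-z)^{-3/2}`), for every `β ∈ (0,1)` we have `r_β ∈ (0,1)` and the
saddle point equation `β r_β f'(r_β) = f(r_β)` holds. -/
theorem saddle_point_equation (β : ℝ) (hβ0 : 0 < β) (hβ1 : β < 1)
    (r : ℝ) (hr : r = (8 - 4 * β - β ^ 2 - Real.sqrt (β ^ 3 * (8 + β))) / 8) :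
    0 < r ∧ r < 1 ∧
      β * r * ((1 / 2) * (1 - r) ^ (-(3 / 2) : ℝ)) = (1 - r) ^ (-(1 / 2) : ℝ) - 1 := by
  have hw0 : 0 < (β + √(β * (β + 8))) / 4 := by positivity
  set w := (β + √(β * (β + 8))) / 4
  have hw1 : w < 1 := quadratic_root_lt_one hβ0 hβ1
  obtain rfl : r = 1 - w ^ 2 := by rw [hr, one_sub_sq_quadratic_root hβ0.le]
  refine ⟨by nlinarith, by nlinarith, ?_⟩
  exact saddle_point_equation_of_quadratic hw0 (quadratic_root_eq hβ0.le)
end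

section
/- For d = 3, the function φ(β) = β log(2 f(r_β)) - log r_β - β log β - (1/2 - β) log(1/2 - β), with f(z) = (1-z)^{-1/2} - 1 and r_β = (8 - 4β - β² - √(β³(8+β)))/8, has a stationary point at β = 1/3, where φ(1/3) = log(4√(2/3)). -/
/-!
At `β = 1/3` the radicand `β³(8 + β) = (5/9)²` is a perfect square, so `r = 3/4`, `1 - r = 1/4`
and `f(r) = 1`, while the chain rule gives `r' = -9/10`. In
`φ' = log(2 f(r)) + β f'(r) r' / f(r) - r'/r - log(β / (1/2 - β))`
the middle terms are `-6/5` and `+6/5`, and `log 2` cancels against `log((1/3)/(1/6))`.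
-/

open Real

namespace DimThree

noncomputable section

def f (z : ℝ) : ℝ := (1 - z) ^ (-(1 / 2) : ℝ) - 1

def rBeta (β : ℝ) : ℝ := (8 - 4 * β - β ^ 2 - √(β ^ 3 * (8 + β))) / 8

def phi (r : ℝ → ℝ) (β : ℝ) : ℝ :=
  β * log (2 * f (r β)) - log (r β) - β * log β - (1 / 2 - β) * log (1 / 2 - β)

end

theorem hasDerivAt_f {z : ℝ} (hz : z ≠ 1) :
    HasDerivAt f ((1 - z) ^ (-(3 / 2) : ℝ) / 2) z := by
  have h := ((hasDerivAt_id' z).const_sub 1).rpow_const (p := -(1 / 2))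
    (Or.inl (sub_ne_zero.mpr hz.symm))
  refine (h.sub_const 1).congr_deriv ?_
  rw [show (-(1 / 2) : ℝ) - 1 = -(3 / 2) by norm_num]
  ring

theorem hasDerivAt_rBeta {β : ℝ} (hβ : β ^ 3 * (8 + β) ≠ 0) :
    HasDerivAt rBeta
      ((-4 - 2 * β - (3 * β ^ 2 * (8 + β) + β ^ 3) / (2 * √(β ^ 3 * (8 + β)))) / 8) β := by
  have hpoly : HasDerivAt (fun x : ℝ => x ^ 3 * (8 + x)) (3 * β ^ 2 * (8 + β) + β ^ 3) β := by
    refine ((hasDerivAt_pow 3 β).mul ((hasDerivAt_id' β).const_add 8)).congr_deriv ?_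
    ring
  have h := ((((hasDerivAt_id' β).const_mul 4).const_sub 8).sub (hasDerivAt_pow 2 β)).sub
    (hpoly.sqrt hβ) |>.div_const 8
  refine h.congr_deriv ?_
  ring

theorem hasDerivAt_phi {r : ℝ → ℝ} {r' β : ℝ} (hr : HasDerivAt r r' β) (hr0 : r β ≠ 0)
    (hr1 : r β ≠ 1) (hf : f (r β) ≠ 0) (hβ : β ≠ 0) (hβ' : 1 / 2 - β ≠ 0) :
    HasDerivAt (phi r)
      (log (2 * f (r β)) + β * ((1 - r β) ^ (-(3 / 2) : ℝ) / 2 * r' / f (r β))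
        - r' / r β - (log β - log (1 / 2 - β))) β := by
  have hlogf := (((hasDerivAt_f hr1).comp β hr).const_mul 2).log (mul_ne_zero two_ne_zero hf)
  have hent := (hasDerivAt_mul_log hβ').comp β ((hasDerivAt_id' β).const_sub (1 / 2))
  have h :=
    ((((hasDerivAt_id' β).mul hlogf).sub (hr.log hr0)).sub (hasDerivAt_mul_log hβ)).sub hent
  refine h.congr_deriv ?_
  simp only [Function.comp_apply]
  field_simp
  ring

theorem sqrt_third : √((1 / 3 : ℝ) ^ 3 * (8 + 1 / 3)) = 5 / 9 := by
  rw [show (1 / 3 : ℝ) ^ 3 * (8 + 1 / 3) = (5 / 9) ^ 2 by norm_num, sqrt_sq (by norm_num)]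

theorem rBeta_third : rBeta (1 / 3) = 3 / 4 := by
  rw [rBeta, sqrt_third]
  norm_num

theorem hasDerivAt_rBeta_third : HasDerivAt rBeta (-(9 / 10)) (1 / 3) := by
  refine (hasDerivAt_rBeta (by norm_num)).congr_deriv ?_
  rw [sqrt_third]
  norm_num

theorem one_quarter_rpow (p : ℝ) : (1 / 4 : ℝ) ^ p = 2 ^ (-2 * p) := by
  rw [rpow_mul zero_le_two, show (2 : ℝ) ^ (-2 : ℝ) = 1 / 4 by norm_num [rpow_neg]]

theorem f_three_quarters : f (3 / 4) = 1 := by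
  rw [f, show (1 : ℝ) - 3 / 4 = 1 / 4 by norm_num, one_quarter_rpow]
  norm_num

end DimThree

open DimThree

/-- For `d = 3`, the function
`φ(β) = β log(2 f(r_β)) - log r_β - β log β - (1/2 - β) log(1/2 - β)`,
with `f(z) = (1-z)^{-1/2} - 1` and `r_β = (8 - 4β - β² - √(β³(8+β)))/8`,
has a stationary point at `β = 1/3`, where `φ(1/3) = log(4√(2/3))`. -/
theorem phi_stationary_point
    (r : ℝ → ℝ)
    (hr : ∀ β, r β = (8 - 4 * β - β ^ 2 - Real.sqrt (β ^ 3 * (8 + β))) / 8)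
    (φ : ℝ → ℝ)
    (hφ : ∀ β, φ β = β * Real.log (2 * ((1 - r β) ^ (-(1 / 2) : ℝ) - 1))
      - Real.log (r β) - β * Real.log β - (1 / 2 - β) * Real.log (1 / 2 - β)) :
    HasDerivAt φ 0 (1 / 3) ∧ φ (1 / 3) = Real.log (4 * Real.sqrt (2 / 3)) := by
  obtain rfl : r = rBeta := funext hr
  obtain rfl : φ = phi rBeta := funext hφ
  have hf : f (rBeta (1 / 3)) = 1 := by rw [rBeta_third, f_three_quarters]
  refine ⟨?_, ?_⟩
  · have h := hasDerivAt_phi hasDerivAt_rBeta_third (by norm_num [rBeta_third])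
      (by norm_num [rBeta_third]) (by norm_num [hf]) (by norm_num) (by norm_num)
    rw [hf, rBeta_third, show (1 : ℝ) - 3 / 4 = 1 / 4 by norm_num, one_quarter_rpow] at h
    convert h using 1
    rw [← log_div (by norm_num) (by norm_num)]
    norm_num
  · rw [phi, hf, rBeta_third]
    have log_four : log (4 : ℝ) = 2 * log 2 := by
      rw [show (4 : ℝ) = 2 ^ 2 by norm_num, log_pow]
      norm_num
    have log_six : log (6 : ℝ) = log 2 + log 3 := by
      rw [show (6 : ℝ) = 2 * 3 by norm_num, log_mul] <;> norm_num
    norm_num [log_div, log_mul, log_sqrt, log_four, log_six]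
    ring
end

section
/- Fix d ≥ 3, m ≥ 0 and ρ ∈ ℕ^m. Let μ = (d-2)²/(d-1), and let Λ_{j,t} be defined by Λ_{j,1} = jμ and Λ_{j,t} = ∑_{k=1}^{j-1} k μ Λ_{j-k,t-1} for t > 1. Then (1/(2j))∑_{t=1}^j (j/t)Λ_{j,t} = ((d-1)^j - 1)²/(2j(d-1)^j). -/
open Finset

lemma hockey (k : ℕ) : ∀ n : ℕ, ∑ m ∈ range n, m.choose k = n.choose (k+1) := by
  intro n
  induction n with
  | zero => simp
  | succ n ih =>
    rw [Finset.sum_range_succ, ih, Nat.choose_succ_succ, Nat.succ_eq_add_one]; omega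

lemma conv (t : ℕ) : ∀ j : ℕ, ∑ i ∈ range j, (j - i) * ((i+t+1).choose (2*t+1)) = (j+t+2).choose (2*t+3) := by
  intro j
  induction j with
  | zero => simp [Nat.choose_eq_zero_of_lt (by omega : t+2 < 2*t+3)]
  | succ j ih =>
    have hsplit : ∀ i ∈ range (j+1), (j + 1 - i) * ((i+t+1).choose (2*t+1))
        = (j - i) * ((i+t+1).choose (2*t+1)) + (i+t+1).choose (2*t+1) := by
      intro i hi; simp only [mem_range] at hi
      have : j + 1 - i = (j - i) + 1 := by omega
      rw [this]; ring
    rw [Finset.sum_congr rfl hsplit, Finset.sum_add_distrib, Finset.sum_range_succ,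
      Nat.sub_self, zero_mul, add_zero, ih]
    have h2 : ∑ i ∈ range (j+1), (i+t+1).choose (2*t+1) = (j+t+2).choose (2*t+2) := by
      have h3 := hockey (2*t+1) (j+t+2)
      rw [show j+t+2 = (t+1)+(j+1) by ring, Finset.sum_range_add] at h3
      have h4 : ∑ m ∈ range (t+1), m.choose (2*t+1) = 0 :=
        Finset.sum_eq_zero fun m hm => Nat.choose_eq_zero_of_lt (by simp only [mem_range] at hm; omega)
      rw [h4, zero_add] at h3
      have h5 : ∑ i ∈ range (j+1), (i+t+1).choose (2*t+1) = ∑ i ∈ range (j+1), (t+1+i).choose (2*t+1) :=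
        Finset.sum_congr rfl fun i _ => by rw [show i+t+1 = t+1+i by ring]
      rw [h5, h3, show t+1+(j+1) = j+t+2 by ring]
    have hp : (j+t+3).choose (2*t+3) = (j+t+2).choose (2*t+2) + (j+t+2).choose (2*t+3) := by
      simpa [Nat.succ_eq_add_one, show 2*t+2+1=2*t+3 by ring, show j+t+2+1 = j+t+3 by ring]
        using Nat.choose_succ_succ (j+t+2) (2*t+2)
    rw [h2, show j+1+t+2 = j+t+3 by ring, hp]
    omega

lemma pascal3 (n s : ℕ) : (n+s+3).choose (2*s+2) + (n+s+1).choose (2*s+2)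
    = 2 * (n+s+2).choose (2*s+2) + (n+s+1).choose (2*s) := by
  have h1 : (n+s+3).choose (2*s+2) = (n+s+2).choose (2*s+1) + (n+s+2).choose (2*s+2) := by
    simpa [Nat.succ_eq_add_one, show n+s+2+1 = n+s+3 by ring, show 2*s+1+1 = 2*s+2 by ring]
      using Nat.choose_succ_succ (n+s+2) (2*s+1)
  have h2 : (n+s+2).choose (2*s+1) = (n+s+1).choose (2*s) + (n+s+1).choose (2*s+1) := by
    simpa [Nat.succ_eq_add_one, show n+s+1+1 = n+s+2 by ring, show 2*s+1 = 2*s+1 by ring]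
      using Nat.choose_succ_succ (n+s+1) (2*s)
  have h3 : (n+s+2).choose (2*s+2) = (n+s+1).choose (2*s+1) + (n+s+1).choose (2*s+2) := by
    simpa [Nat.succ_eq_add_one, show n+s+1+1 = n+s+2 by ring, show 2*s+1+1 = 2*s+2 by ring]
      using Nat.choose_succ_succ (n+s+1) (2*s+1)
  omega

lemma u_closed (b μ : ℝ) (hb : 2 ≤ b) (hμ : μ = (b-1)^2/b) (n : ℕ) :
    ∑ t ∈ range (n+1), ((n+t).choose (2*t) : ℝ) * μ^t = (b^(n+1) + b⁻¹^n)/(b+1) := by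
  have hb0 : b ≠ 0 := by linarith
  have hb1 : b + 1 ≠ 0 := by linarith
  induction n using Nat.twoStepInduction with
  | zero => simp; field_simp
  | one =>
    rw [show (1:ℕ)+1 = 2 by rfl, Finset.sum_range_succ, Finset.sum_range_one]
    norm_num [hμ]
    field_simp
    ring
  | more n ih1 ih2 =>
    have key : ∑ t ∈ range (n+2+1), ((n+2+t).choose (2*t) : ℝ) * μ^t
        = (2+μ) * (∑ t ∈ range (n+1+1), ((n+1+t).choose (2*t) : ℝ) * μ^t)
          - ∑ t ∈ range (n+1), ((n+t).choose (2*t) : ℝ) * μ^t := by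
      rw [Finset.sum_range_succ' (fun t => ((n+2+t).choose (2*t) : ℝ) * μ^t) (n+2)]
      have hterm : ∀ i ∈ range (n+2), ((n+2+(i+1)).choose (2*(i+1)) : ℝ) * μ^(i+1)
          = 2 * (((n+i+2).choose (2*i+2) : ℝ) * μ^(i+1))
            + μ * (((n+1+i).choose (2*i) : ℝ) * μ^i)
            - ((n+i+1).choose (2*i+2) : ℝ) * μ^(i+1) := by
        intro i _
        have hp := pascal3 n i
        have hpc : ((n+i+3).choose (2*i+2) : ℝ)
            = 2 * ((n+i+2).choose (2*i+2) : ℝ) + ((n+i+1).choose (2*i) : ℝ)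
              - ((n+i+1).choose (2*i+2) : ℝ) := by
          have := congrArg (Nat.cast : ℕ → ℝ) hp
          push_cast at this
          linarith
        rw [show n+2+(i+1) = n+i+3 by ring, show 2*(i+1) = 2*i+2 by ring, hpc,
          show n+1+i = n+i+1 by ring]
        ring
      rw [Finset.sum_congr rfl hterm]
      rw [Finset.sum_sub_distrib, Finset.sum_add_distrib, ← Finset.mul_sum, ← Finset.mul_sum]
      -- T1 : ∑_{i∈range(n+2)} C(n+i+2,2i+2) μ^{i+1} = u(n+1) - 1
      have T1 : ∑ i ∈ range (n+2), ((n+i+2).choose (2*i+2) : ℝ) * μ^(i+1)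
          = (∑ t ∈ range (n+1+1), ((n+1+t).choose (2*t) : ℝ) * μ^t) - 1 := by
        rw [Finset.sum_range_succ (fun i => ((n+i+2).choose (2*i+2) : ℝ) * μ^(i+1)) (n+1),
          Finset.sum_range_succ' (fun t => ((n+1+t).choose (2*t) : ℝ) * μ^t) (n+1)]
        have hz : ((n+(n+1)+2).choose (2*(n+1)+2) : ℝ) = 0 := by
          norm_cast; exact Nat.choose_eq_zero_of_lt (by omega)
        have he : ∑ i ∈ range (n+1), ((n+i+2).choose (2*i+2) : ℝ) * μ^(i+1)
            = ∑ k ∈ range (n+1), ((n+1+(k+1)).choose (2*(k+1)) : ℝ) * μ^(k+1) :=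
          Finset.sum_congr rfl fun i _ => by
            rw [show n+1+(i+1) = n+i+2 by ring, show 2*(i+1) = 2*i+2 by ring]
        rw [hz, he]; simp
      -- T2 : ∑_{i∈range(n+2)} C(n+1+i,2i) μ^i = u(n+1)
      have T2 : ∑ i ∈ range (n+2), ((n+1+i).choose (2*i) : ℝ) * μ^i
          = ∑ t ∈ range (n+1+1), ((n+1+t).choose (2*t) : ℝ) * μ^t := rfl
      -- T3 : ∑_{i∈range(n+2)} C(n+i+1,2i+2) μ^{i+1} = u(n) - 1
      have T3 : ∑ i ∈ range (n+2), ((n+i+1).choose (2*i+2) : ℝ) * μ^(i+1)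
          = (∑ t ∈ range (n+1), ((n+t).choose (2*t) : ℝ) * μ^t) - 1 := by
        rw [Finset.sum_range_succ (fun i => ((n+i+1).choose (2*i+2) : ℝ) * μ^(i+1)) (n+1),
          Finset.sum_range_succ (fun i => ((n+i+1).choose (2*i+2) : ℝ) * μ^(i+1)) n,
          Finset.sum_range_succ' (fun t => ((n+t).choose (2*t) : ℝ) * μ^t) n]
        have hz1 : ((n+(n+1)+1).choose (2*(n+1)+2) : ℝ) = 0 := by
          norm_cast; exact Nat.choose_eq_zero_of_lt (by omega)
        have hz2 : ((n+n+1).choose (2*n+2) : ℝ) = 0 := by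
          norm_cast; exact Nat.choose_eq_zero_of_lt (by omega)
        have he : ∑ i ∈ range n, ((n+i+1).choose (2*i+2) : ℝ) * μ^(i+1)
            = ∑ k ∈ range n, ((n+(k+1)).choose (2*(k+1)) : ℝ) * μ^(k+1) :=
          Finset.sum_congr rfl fun i _ => by
            rw [show n+(i+1) = n+i+1 by ring, show 2*(i+1) = 2*i+2 by ring]
        rw [hz1, hz2, he]; simp
      rw [T1, T2, T3]
      simp [Nat.choose_zero_right]
      ring
    rw [key, ih1, ih2, hμ]
    simp only [inv_pow]
    field_simp
    ring

lemma conv2 (t j : ℕ) : ∑ i ∈ range j, (i+1) * ((j-1-i+t+1).choose (2*t+1)) = (j+t+2).choose (2*t+3) := by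
  rw [← conv t j, ← Finset.sum_range_reflect (fun i => (j - i) * ((i+t+1).choose (2*t+1))) j]
  exact Finset.sum_congr rfl fun i hi => by
    simp only [mem_range] at hi
    rw [show j - (j-1-i) = i+1 by omega]

lemma lambda_closed (μ : ℝ) (Λ : ℕ → ℕ → ℝ)
    (h1 : ∀ j : ℕ, Λ j 1 = (j : ℝ) * μ)
    (hrec : ∀ j t : ℕ, 2 ≤ t →
      Λ j t = ∑ k ∈ Finset.Icc 1 (j - 1), (k : ℝ) * μ * Λ (j - k) (t - 1)) :
    ∀ t j : ℕ, Λ (j+1) (t+1) = μ^(t+1) * ((j+t+1).choose (2*t+1) : ℝ) := by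
  intro t
  induction t with
  | zero =>
    intro j
    rw [show j+0+1 = j+1 from rfl, show 2*0+1 = 1 from rfl, Nat.choose_one_right, h1 (j+1)]
    push_cast; ring
  | succ t ih =>
    intro j
    rw [hrec (j+1) (t+2) (by omega)]
    simp only [Nat.add_sub_cancel]
    rw [show Finset.Icc 1 j = Finset.Ico 1 (j+1) by rw [Finset.Ico_add_one_right_eq_Icc],
      Finset.sum_Ico_eq_sum_range]
    simp only [Nat.add_sub_cancel_left, show j+1-1 = j from rfl, show t+2-1 = t+1 from rfl]
    have hterm : ∀ i ∈ range j, ((1+i : ℕ) : ℝ) * μ * Λ (j+1-(1+i)) (t+1)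
        = μ^(t+2) * (((i+1) * ((j-1-i+t+1).choose (2*t+1)) : ℕ) : ℝ) := by
      intro i hi
      simp only [mem_range] at hi
      have hj : j + 1 - (1+i) = (j-1-i) + 1 := by omega
      rw [hj, ih (j-1-i)]
      push_cast; ring
    rw [Finset.sum_congr rfl hterm, ← Finset.mul_sum, ← Nat.cast_sum, conv2 t j,
      show j+(t+1)+1 = j+t+2 by ring, show 2*(t+1)+1 = 2*t+3 by ring]

/-- Fix `d ≥ 3` and let `μ = (d-2)²/(d-1)`.  Suppose `Λ_{j,t}` satisfies
`Λ_{j,1} = jμ` and `Λ_{j,t} = ∑_{k=1}^{j-1} k μ Λ_{j-k,t-1}` for `t ≥ 2`.  Then for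
every `j ≥ 1`, `(1/(2j)) ∑_{t=1}^j (j/t) Λ_{j,t} = ((d-1)^j - 1)²/(2j(d-1)^j)`. -/
theorem lambda_recurrence_sum (d : ℕ) (hd : 3 ≤ d)
    (μ : ℝ) (hμ : μ = ((d : ℝ) - 2) ^ 2 / ((d : ℝ) - 1))
    (Λ : ℕ → ℕ → ℝ)
    (h1 : ∀ j : ℕ, Λ j 1 = (j : ℝ) * μ)
    (hrec : ∀ j t : ℕ, 2 ≤ t →
      Λ j t = ∑ k ∈ Finset.Icc 1 (j - 1), (k : ℝ) * μ * Λ (j - k) (t - 1)) :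
    ∀ j : ℕ, 1 ≤ j →
      (1 / (2 * (j : ℝ))) * ∑ t ∈ Finset.Icc 1 j, ((j : ℝ) / (t : ℝ)) * Λ j t =
        (((d : ℝ) - 1) ^ j - 1) ^ 2 / (2 * j * ((d : ℝ) - 1) ^ j) := by
  intro j hj
  obtain ⟨n, rfl⟩ : ∃ n, j = n + 1 := ⟨j - 1, by omega⟩
  set b : ℝ := (d : ℝ) - 1 with hbdef
  have hd3 : (3:ℝ) ≤ (d:ℝ) := by exact_mod_cast hd
  have hb : 2 ≤ b := by rw [hbdef]; linarith
  have hb0 : b ≠ 0 := by linarith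
  have hμb : μ = (b-1)^2/b := by rw [hμ, hbdef]; ring_nf
  have hΛ := lambda_closed μ Λ h1 hrec
  -- rewrite sum
  have hsum : ∑ t ∈ Finset.Icc 1 (n+1), (((n+1:ℕ) : ℝ) / (t : ℝ)) * Λ (n+1) t
      = ∑ s ∈ range (n+1), μ^(s+1) * (((n+s+2).choose (2*s+2) : ℝ) + ((n+s+1).choose (2*s+2) : ℝ)) := by
    rw [show Finset.Icc 1 (n+1) = Finset.Ico 1 (n+2) by rw [← Finset.Ico_add_one_right_eq_Icc]; rfl,
      Finset.sum_Ico_eq_sum_range]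
    simp only [show n+2-1 = n+1 from rfl]
    refine Finset.sum_congr rfl fun s hs => ?_
    rw [show 1 + s = s + 1 by ring, hΛ s n]
    have habs : (n+s+2) * (n+s+1).choose (2*s+1) = (n+s+2).choose (2*s+2) * (2*s+2) := by
      simpa [Nat.succ_eq_add_one, show n+s+1+1 = n+s+2 by ring, show 2*s+1+1 = 2*s+2 by ring]
        using Nat.add_one_mul_choose_eq (n+s+1) (2*s+1)
    have hpas : (n+s+2).choose (2*s+2) = (n+s+1).choose (2*s+1) + (n+s+1).choose (2*s+2) := by
      simpa [Nat.succ_eq_add_one, show n+s+1+1 = n+s+2 by ring, show 2*s+1+1 = 2*s+2 by ring]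
        using Nat.choose_succ_succ (n+s+1) (2*s+1)
    have habs' : ((n:ℝ)+s+2) * ((n+s+1).choose (2*s+1) : ℝ) = ((n+s+2).choose (2*s+2) : ℝ) * (2*s+2) := by
      exact_mod_cast habs
    have hpas' : ((n+s+2).choose (2*s+2) : ℝ) = ((n+s+1).choose (2*s+1) : ℝ) + ((n+s+1).choose (2*s+2) : ℝ) := by
      exact_mod_cast hpas
    have hkey : ((n:ℝ)+1) * ((n+s+1).choose (2*s+1) : ℝ)
        = ((s:ℝ)+1) * (((n+s+2).choose (2*s+2) : ℝ) + ((n+s+1).choose (2*s+2) : ℝ)) := by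
      linear_combination habs' + ((s:ℝ)+1) * hpas'
    have hs0 : ((s:ℝ)+1) ≠ 0 := by positivity
    push_cast
    field_simp
    linear_combination μ^(s+1) * hkey
  rw [hsum]
  have hmul : ∀ s ∈ range (n+1), μ^(s+1) * (((n+s+2).choose (2*s+2) : ℝ) + ((n+s+1).choose (2*s+2) : ℝ))
      = μ^(s+1) * ((n+s+2).choose (2*s+2) : ℝ) + μ^(s+1) * ((n+s+1).choose (2*s+2) : ℝ) :=
    fun s _ => by ring
  rw [Finset.sum_congr rfl hmul, Finset.sum_add_distrib]
  have hA : ∑ s ∈ range (n+1), μ^(s+1) * ((n+s+2).choose (2*s+2) : ℝ)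
      = (∑ t ∈ range (n+1+1), ((n+1+t).choose (2*t) : ℝ) * μ^t) - 1 := by
    rw [Finset.sum_range_succ' (fun t => ((n+1+t).choose (2*t) : ℝ) * μ^t) (n+1)]
    have he : ∀ s ∈ range (n+1), μ^(s+1) * ((n+s+2).choose (2*s+2) : ℝ)
        = ((n+1+(s+1)).choose (2*(s+1)) : ℝ) * μ^(s+1) := fun s _ => by
      rw [show n+1+(s+1) = n+s+2 by ring, show 2*(s+1) = 2*s+2 by ring]; ring
    rw [Finset.sum_congr rfl he]; simp
  have hB : ∑ s ∈ range (n+1), μ^(s+1) * ((n+s+1).choose (2*s+2) : ℝ)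
      = (∑ t ∈ range (n+1), ((n+t).choose (2*t) : ℝ) * μ^t) - 1 := by
    rw [Finset.sum_range_succ (fun s => μ^(s+1) * ((n+s+1).choose (2*s+2) : ℝ)) n,
      Finset.sum_range_succ' (fun t => ((n+t).choose (2*t) : ℝ) * μ^t) n]
    have hz : ((n+n+1).choose (2*n+2) : ℝ) = 0 := by
      norm_cast; exact Nat.choose_eq_zero_of_lt (by omega)
    have he : ∀ s ∈ range n, μ^(s+1) * ((n+s+1).choose (2*s+2) : ℝ)
        = ((n+(s+1)).choose (2*(s+1)) : ℝ) * μ^(s+1) := fun s _ => by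
      rw [show n+(s+1) = n+s+1 by ring, show 2*(s+1) = 2*s+2 by ring]; ring
    rw [Finset.sum_congr rfl he, hz]; simp
  rw [hA, hB, u_closed b μ hb hμb (n+1), u_closed b μ hb hμb n]
  have hb1 : b + 1 ≠ 0 := by linarith
  have hn0 : ((n:ℝ)+1) ≠ 0 := by positivity
  have hbp : b ^ (n+1) ≠ 0 := pow_ne_zero _ hb0
  push_cast
  simp only [inv_pow]
  field_simp
  ring
end
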